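/- arXiv:1911.01462 — 3 statements merged into one kernel-verified Lean document; each statement's English description precedes it below -/
import Mathlib

section
/- Let γ be the standard Gaussian measure on ℝ and let H_n be the probabilists' Hermite polynomials. Then ∫ sign(x) dγ(x) = 0, and for every integer i ≥ 1, ∫ sign(x)·H_i(x) dγ(x) = √(2/π)·H_{i−1}(0). -/
open MeasureTheory ProbabilityTheory Real

/-- `sign(a) = 1` if `a ≥ 0` and `-1` otherwise. -/
noncomputable def sgn (a : ℝ) : ℝ := if 0 ≤ a then 1 else -1

/-- The probabilists' Hermite polynomials, evaluated at a real number. -/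
noncomputable def H (n : ℕ) (x : ℝ) : ℝ := Polynomial.aeval x (Polynomial.hermite n)

/-!
Writing `φ(x) = exp(-x²/2)`, the recursion `H_{n+1} = X·H_n - H_n'` says exactly that
`(-H_n φ)' = H_{n+1} φ`. Since `H_n φ` is integrable and hence vanishes at `±∞`, the
integrals of `H_{n+1} φ` over `(0, ∞)` and `(-∞, 0]` are `H_n(0)` and `-H_n(0)`, so
`∫ sign·H_{n+1} φ = 2 H_n(0)`; the normalising constant `1/√(2π)` of `γ` turns `2` into
`√(2/π)`. For `i = 0`, `∫ sign·φ = 0` because `φ` is even.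
-/

open Polynomial Set

lemma integral_gaussianReal_zero_one (f : ℝ → ℝ) :
    ∫ x, f x ∂(gaussianReal 0 1) = (√(2 * π))⁻¹ * ∫ x, f x * rexp (-(x ^ 2 / 2)) := by
  rw [integral_gaussianReal_eq_integral_smul one_ne_zero, ← integral_const_mul]
  congr 1 with x
  simp only [gaussianPDFReal, NNReal.coe_one, mul_one, sub_zero, smul_eq_mul, neg_div]
  ring

lemma integrable_aeval_mul_exp_neg_sq_div_two {R : Type*} [CommSemiring R] [Algebra R ℝ]
    (p : R[X]) : Integrable fun x : ℝ => aeval x p * rexp (-(x ^ 2 / 2)) := by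
  induction p using Polynomial.induction_on' with
  | add p q hp hq => simpa only [map_add, add_mul, Pi.add_def] using hp.add hq
  | monomial n r =>
    have hn : (-1 : ℝ) < n := by linarith [n.cast_nonneg (α := ℝ)]
    refine ((integrable_rpow_mul_exp_neg_mul_sq (b := 1 / 2) (by norm_num) hn).const_mul
      (algebraMap R ℝ r)).congr (.of_forall fun x => ?_)
    simp only [aeval_monomial, rpow_natCast]
    ring_nf

lemma integrable_H_mul_exp (n : ℕ) : Integrable fun x => H n x * rexp (-(x ^ 2 / 2)) :=
  integrable_aeval_mul_exp_neg_sq_div_two _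

lemma hasDerivAt_neg_H_mul_exp (n : ℕ) (x : ℝ) :
    HasDerivAt (fun y => -(H n y * rexp (-(y ^ 2 / 2)))) (H (n + 1) x * rexp (-(x ^ 2 / 2))) x := by
  have hexp : HasDerivAt (fun y : ℝ => rexp (-(y ^ 2 / 2))) (-x * rexp (-(x ^ 2 / 2))) x := by
    simpa [mul_comm] using (((hasDerivAt_pow 2 x).div_const 2).neg).exp
  refine (HasDerivAt.mul ((hermite n).hasDerivAt_aeval x) hexp).neg.congr_deriv ?_
  simp only [H, hermite_succ, map_sub, map_mul, aeval_X]
  ring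

lemma setIntegral_Ioi_H_succ_mul_exp (n : ℕ) :
    ∫ x in Ioi 0, H (n + 1) x * rexp (-(x ^ 2 / 2)) = H n 0 := by
  have hderiv := fun x (_ : x ∈ Ici (0 : ℝ)) => hasDerivAt_neg_H_mul_exp n x
  have hlim := tendsto_zero_of_hasDerivAt_of_integrableOn_Ioi
    (fun x hx => hderiv x (Ioi_subset_Ici_self hx)) (integrable_H_mul_exp _).integrableOn
    (integrable_H_mul_exp n).neg.integrableOn
  rw [integral_Ioi_of_hasDerivAt_of_tendsto' hderiv (integrable_H_mul_exp _).integrableOn hlim]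
  simp

lemma setIntegral_Iic_H_succ_mul_exp (n : ℕ) :
    ∫ x in Iic 0, H (n + 1) x * rexp (-(x ^ 2 / 2)) = -H n 0 := by
  have hderiv := fun x (_ : x ∈ Iic (0 : ℝ)) => hasDerivAt_neg_H_mul_exp n x
  have hlim := tendsto_zero_of_hasDerivAt_of_integrableOn_Iic hderiv
    (integrable_H_mul_exp _).integrableOn (integrable_H_mul_exp n).neg.integrableOn
  rw [integral_Iic_of_hasDerivAt_of_tendsto' hderiv (integrable_H_mul_exp _).integrableOn hlim]
  simp

lemma integral_sgn_mul {g : ℝ → ℝ} (hg : Integrable g) :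
    ∫ x, sgn x * g x = (∫ x in Ioi 0, g x) - ∫ x in Iic 0, g x := by
  have hsgn : Integrable fun x => sgn x * g x :=
    hg.bdd_mul (c := 1)
      (Measurable.ite measurableSet_Ici measurable_const measurable_const).aestronglyMeasurable
      (.of_forall fun x => by unfold sgn; split_ifs <;> simp)
  rw [← intervalIntegral.integral_Iio_add_Ici (b := 0) hsgn.integrableOn hsgn.integrableOn,
    integral_Iic_eq_integral_Iio, ← integral_Ici_eq_integral_Ioi, sub_eq_neg_add,
    ← integral_neg]
  congr 1
  · refine setIntegral_congr_fun measurableSet_Iio fun x hx => ?_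
    simp [sgn, not_le.mpr (mem_Iio.mp hx)]
  · refine setIntegral_congr_fun measurableSet_Ici fun x hx => ?_
    simp [sgn, mem_Ici.mp hx]

lemma integral_sgn_mul_eq_zero_of_even {g : ℝ → ℝ} (hg : Integrable g)
    (heven : ∀ x, g (-x) = g x) : ∫ x, sgn x * g x = 0 := by
  have h := integral_comp_neg_Ioi 0 g
  simp only [heven, neg_zero] at h
  rw [integral_sgn_mul hg, h, sub_self]

lemma sqrt_two_div_pi : √(2 / π) = 2 * (√(2 * π))⁻¹ := by
  rw [show 2 / π = 2 ^ 2 / (2 * π) by ring, sqrt_div' _ (by positivity),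
    sqrt_sq zero_le_two, div_eq_mul_inv]

/-- Hermite coefficients of the sign function with respect to the standard Gaussian:
`∫ sign dγ = 0` and for `i ≥ 1`, `∫ sign·H_i dγ = √(2/π)·H_{i-1}(0)`. -/
theorem stmt2 :
    (∫ x : ℝ, sgn x ∂(gaussianReal 0 1)) = 0 ∧
    ∀ i : ℕ, 1 ≤ i →
      (∫ x : ℝ, sgn x * H i x ∂(gaussianReal 0 1))
        = Real.sqrt (2 / Real.pi) * H (i - 1) 0 := by
  constructor
  · rw [integral_gaussianReal_zero_one, integral_sgn_mul_eq_zero_of_even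
      (by simpa [H] using integrable_H_mul_exp 0) fun x => by rw [neg_sq], mul_zero]
  · intro i hi
    obtain ⟨n, rfl⟩ : ∃ n, i = n + 1 := ⟨i - 1, by omega⟩
    simp_rw [integral_gaussianReal_zero_one, mul_assoc]
    rw [integral_sgn_mul (integrable_H_mul_exp _), setIntegral_Ioi_H_succ_mul_exp,
      setIntegral_Iic_H_succ_mul_exp, sqrt_two_div_pi, Nat.add_sub_cancel]
    ring
end

section
/- Let k ≥ 1 and let β_1, …, β_k be real numbers with β_1² + ⋯ + β_k² = 1. Then for every integer n ≥ 0 and all real numbers x_1, …, x_k, H_n(β_1 x_1 + ⋯ + β_k x_k) = Σ_{n_1 + ⋯ + n_k = n} (n!/(n_1!⋯n_k!)) · ∏_{j=1}^k β_j^{n_j} · H_{n_j}(x_j), where the sum ranges over all tuples of nonnegative integers (n_1, …, n_k) summing to n. -/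
open Finset

open Polynomial

theorem derivative_hermite : ∀ n : ℕ, derivative (hermite n) = (n : ℤ[X]) * hermite (n - 1)
  | 0 => by simp
  | 1 => by simp [hermite_one, hermite_zero]
  | (n + 2) => by
    rw [hermite_succ, derivative_sub, derivative_mul, derivative_X, one_mul,
      derivative_hermite (n + 1), derivative_mul,
      show (n:ℕ) + 1 - 1 = n from rfl, show (n:ℕ) + 2 - 1 = n + 1 from rfl,
      derivative_hermite n]
    have h : (hermite (n+1) : ℤ[X]) = X * hermite n - derivative (hermite n) := hermite_succ n
    rw [derivative_hermite n] at h
    rw [h]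
    simp [derivative_natCast]
    ring

theorem H_zero (x : ℝ) : H 0 x = 1 := by simp [H, hermite_zero]

theorem H_succ (n : ℕ) (x : ℝ) : H (n + 1) x = x * H n x - n * H (n - 1) x := by
  unfold H
  rw [hermite_succ, derivative_hermite]
  simp [mul_comm]

theorem H_one (x : ℝ) : H 1 x = x := by simp [H, hermite_one]

theorem scalar_id (b x : ℝ) (a : ℕ) :
    (b * x) * (b ^ a * H a x)
      = b ^ (a + 1) * H (a + 1) x + (a : ℝ) * b ^ 2 * (b ^ (a - 1) * H (a - 1) x) := by
  cases a with
  | zero => simp [H_zero, H_one]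
  | succ a =>
    rw [H_succ (a + 1) x, show (a:ℕ) + 1 - 1 = a from rfl]
    push_cast
    ring

theorem sum_shift {k : ℕ} (N : ℕ) (j : Fin k) (f : (Fin k → ℕ) → ℝ) :
    ∑ m ∈ Finset.Nat.antidiagonalTuple k (N + 1), (m j : ℝ) * f m
      = ∑ m ∈ Finset.Nat.antidiagonalTuple k N,
          ((m j : ℝ) + 1) * f (Function.update m j (m j + 1)) := by
  classical
  rw [← Finset.sum_filter_of_ne (p := fun m => m j ≠ 0)
    (fun m _ h => by intro h0; apply h; rw [h0]; simp)]
  refine Finset.sum_nbij' (i := fun m => Function.update m j (m j - 1))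
      (j := fun m => Function.update m j (m j + 1)) ?_ ?_ ?_ ?_ ?_
  · intro m hm
    simp only [Finset.mem_filter, Finset.Nat.mem_antidiagonalTuple] at hm ⊢
    obtain ⟨hsum, hj⟩ := hm
    rw [Finset.sum_update_of_mem (Finset.mem_univ j), Finset.sdiff_singleton_eq_erase]
    rw [← Finset.add_sum_erase _ _ (Finset.mem_univ j)] at hsum
    omega
  · intro m hm
    simp only [Finset.mem_filter, Finset.Nat.mem_antidiagonalTuple] at hm ⊢
    constructor
    · rw [Finset.sum_update_of_mem (Finset.mem_univ j), Finset.sdiff_singleton_eq_erase]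
      rw [← Finset.add_sum_erase _ _ (Finset.mem_univ j)] at hm
      omega
    · simp
  · intro m hm
    simp only [Finset.mem_filter] at hm
    rw [Function.update_self, Function.update_idem, Nat.sub_add_cancel (Nat.one_le_iff_ne_zero.2 hm.2),
      Function.update_eq_self]
  · intro m hm
    rw [Function.update_self, Function.update_idem, Nat.add_sub_cancel, Function.update_eq_self]
  · intro m hm
    simp only [Finset.mem_filter] at hm
    rw [Function.update_self, Function.update_idem, Nat.sub_add_cancel (Nat.one_le_iff_ne_zero.2 hm.2),
      Function.update_eq_self]
    have h1 : ((m j - 1 : ℕ) : ℝ) + 1 = (m j : ℝ) := by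
      have := Nat.one_le_iff_ne_zero.2 hm.2
      push_cast [this]
      ring
    rw [h1]

theorem prod_update_eq {k : ℕ} {M : Type*} [CommMonoid M] (f : ∀ _ : Fin k, ℕ → M)
    (m : Fin k → ℕ) (j : Fin k) (v : ℕ) :
    ∏ i, f i (Function.update m j v i)
      = f j v * ∏ i ∈ Finset.univ.erase j, f i (m i) := by
  classical
  have h : (fun i => f i (Function.update m j v i))
      = Function.update (fun i => f i (m i)) j (f j v) := by
    funext i
    rcases eq_or_ne i j with rfl | hij
    · simp
    · simp [Function.update_of_ne hij]
  rw [h, Finset.prod_update_of_mem (Finset.mem_univ j), Finset.sdiff_singleton_eq_erase]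

theorem cfact {k : ℕ} (n : ℕ) (m : Fin k → ℕ) (j : Fin k) :
    ((m j : ℝ) + 1) * ((n + 1).factorial /
        ∏ i, ((Function.update m j (m j + 1) i).factorial : ℝ))
      = ((n : ℝ) + 1) * (n.factorial / ∏ i, ((m i).factorial : ℝ)) := by
  rw [prod_update_eq (fun i a => ((a.factorial : ℝ)))]
  rw [← Finset.mul_prod_erase _ (fun i => ((m i).factorial : ℝ)) (Finset.mem_univ j)]
  have hQ : (0:ℝ) < ∏ i ∈ Finset.univ.erase j, ((m i).factorial : ℝ) :=
    Finset.prod_pos fun i _ => by positivity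
  have h1 : (0:ℝ) < ((m j).factorial : ℝ) := by positivity
  rw [Nat.factorial_succ (m j), Nat.factorial_succ n]
  push_cast
  field_simp

theorem key {k : ℕ} (β : Fin k → ℝ) (hβ : ∑ j, (β j) ^ 2 = 1) (x : Fin k → ℝ) (n : ℕ) :
    (∑ j, β j * x j) *
        (∑ m ∈ Finset.Nat.antidiagonalTuple k n,
          ((n.factorial : ℝ) / ∏ j, ((m j).factorial : ℝ)) *
            ∏ j, (β j ^ (m j) * H (m j) (x j)))
      = (∑ m ∈ Finset.Nat.antidiagonalTuple k (n + 1),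
          (((n+1).factorial : ℝ) / ∏ j, ((m j).factorial : ℝ)) *
            ∏ j, (β j ^ (m j) * H (m j) (x j)))
        + n * (∑ m ∈ Finset.Nat.antidiagonalTuple k (n - 1),
          (((n-1).factorial : ℝ) / ∏ j, ((m j).factorial : ℝ)) *
            ∏ j, (β j ^ (m j) * H (m j) (x j))) := by
  classical
  set c : ℕ → (Fin k → ℕ) → ℝ :=
    fun a m => ((a.factorial : ℝ) / ∏ j, ((m j).factorial : ℝ)) with hc
  set P : (Fin k → ℕ) → ℝ := fun m => ∏ j, (β j ^ (m j) * H (m j) (x j)) with hP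
  -- pointwise expansion
  have expand : ∀ (j : Fin k) (m : Fin k → ℕ),
      (β j * x j) * (c n m * P m)
        = c n m * P (Function.update m j (m j + 1))
          + (m j : ℝ) * (β j ^ 2 * (c n m * P (Function.update m j (m j - 1)))) := by
    intro j m
    simp only [hP]
    rw [← Finset.mul_prod_erase _ (fun i => β i ^ (m i) * H (m i) (x i)) (Finset.mem_univ j),
      prod_update_eq (fun i a => β i ^ a * H a (x i)) m j (m j + 1),
      prod_update_eq (fun i a => β i ^ a * H a (x i)) m j (m j - 1)]
    have hs := scalar_id (β j) (x j) (m j)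
    set R := ∏ i ∈ Finset.univ.erase j, (β i ^ (m i) * H (m i) (x i))
    linear_combination (c n m * R) * hs
  -- LHS as double sum
  rw [Finset.sum_mul]
  have hswap : ∀ j : Fin k, (β j * x j) *
      (∑ m ∈ Finset.Nat.antidiagonalTuple k n, c n m * P m)
      = ∑ m ∈ Finset.Nat.antidiagonalTuple k n,
          (c n m * P (Function.update m j (m j + 1))
            + (m j : ℝ) * (β j ^ 2 * (c n m * P (Function.update m j (m j - 1))))) := by
    intro j
    rw [Finset.mul_sum]
    exact Finset.sum_congr rfl fun m _ => expand j m
  calc ∑ j, (β j * x j) * (∑ m ∈ Finset.Nat.antidiagonalTuple k n, c n m * P m)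
      = ∑ j, ∑ m ∈ Finset.Nat.antidiagonalTuple k n,
          (c n m * P (Function.update m j (m j + 1))
            + (m j : ℝ) * (β j ^ 2 * (c n m * P (Function.update m j (m j - 1))))) :=
        Finset.sum_congr rfl fun j _ => hswap j
    _ = (∑ j, ∑ m ∈ Finset.Nat.antidiagonalTuple k n,
            c n m * P (Function.update m j (m j + 1)))
        + ∑ j, ∑ m ∈ Finset.Nat.antidiagonalTuple k n,
            (m j : ℝ) * (β j ^ 2 * (c n m * P (Function.update m j (m j - 1)))) := by
        rw [← Finset.sum_add_distrib]
        exact Finset.sum_congr rfl fun j _ => Finset.sum_add_distrib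
    _ = (∑ m ∈ Finset.Nat.antidiagonalTuple k (n+1), c (n+1) m * P m)
        + n * ∑ m ∈ Finset.Nat.antidiagonalTuple k (n-1), c (n-1) m * P m := by
        have hcf : ∀ (a : ℕ) (m : Fin k → ℕ) (j : Fin k),
            ((m j : ℝ) + 1) * c (a+1) (Function.update m j (m j + 1))
              = ((a : ℝ) + 1) * c a m := fun a m j => by
          simp only [hc]; exact cfact a m j
        congr 1
        -- Part A
        · have hne : ((n : ℝ) + 1) ≠ 0 := by positivity
          apply mul_left_cancel₀ hne
          rw [Finset.mul_sum]
          calc ∑ j, ((n:ℝ)+1) * ∑ m ∈ Finset.Nat.antidiagonalTuple k n,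
                c n m * P (Function.update m j (m j + 1))
              = ∑ j, ∑ m ∈ Finset.Nat.antidiagonalTuple k (n+1),
                  (m j : ℝ) * (c (n+1) m * P m) := by
                refine Finset.sum_congr rfl fun j _ => ?_
                rw [sum_shift n j (fun m => c (n+1) m * P m), Finset.mul_sum]
                refine Finset.sum_congr rfl fun m _ => ?_
                linear_combination (-P (Function.update m j (m j + 1))) * hcf n m j
            _ = ∑ m ∈ Finset.Nat.antidiagonalTuple k (n+1),
                  (∑ j, (m j : ℝ)) * (c (n+1) m * P m) := by
                rw [Finset.sum_comm]
                exact Finset.sum_congr rfl fun m _ => by rw [Finset.sum_mul]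
            _ = ((n:ℝ)+1) * ∑ m ∈ Finset.Nat.antidiagonalTuple k (n+1),
                  c (n+1) m * P m := by
                rw [Finset.mul_sum]
                refine Finset.sum_congr rfl fun m hm => ?_
                have := Finset.Nat.mem_antidiagonalTuple.1 hm
                have hsum : (∑ j, (m j : ℝ)) = (n:ℝ) + 1 := by
                  rw [← Nat.cast_sum, this]; push_cast; ring
                rw [hsum]
        -- Part B
        · cases n with
          | zero =>
            simp [Finset.Nat.antidiagonalTuple_zero_right]
          | succ N =>
            calc ∑ j, ∑ m ∈ Finset.Nat.antidiagonalTuple k (N+1),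
                  (m j : ℝ) * (β j ^ 2 * (c (N+1) m * P (Function.update m j (m j - 1))))
                = ∑ j, β j ^ 2 * (((N:ℝ)+1) *
                    ∑ m ∈ Finset.Nat.antidiagonalTuple k N, c N m * P m) := by
                  refine Finset.sum_congr rfl fun j _ => ?_
                  rw [sum_shift N j
                    (fun m => β j ^ 2 * (c (N+1) m * P (Function.update m j (m j - 1))))]
                  rw [Finset.mul_sum, Finset.mul_sum]
                  refine Finset.sum_congr rfl fun m _ => ?_
                  rw [Function.update_self, Nat.add_sub_cancel, Function.update_idem,
                    Function.update_eq_self]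
                  linear_combination β j ^ 2 * P m * hcf N m j
              _ = ((N+1:ℕ):ℝ) * ∑ m ∈ Finset.Nat.antidiagonalTuple k (N+1-1),
                    c (N+1-1) m * P m := by
                  rw [← Finset.sum_mul, hβ, Nat.add_sub_cancel]
                  push_cast; ring


/-- Multinomial expansion of Hermite polynomials: for `β₁² + ⋯ + β_k² = 1`,
`H_n(Σ β_j x_j) = Σ_{n₁+⋯+n_k = n} (n!/(n₁!⋯n_k!)) ∏_j β_j^{n_j} H_{n_j}(x_j)`. -/
theorem stmt4 (k : ℕ) (hk : 1 ≤ k) (β : Fin k → ℝ) (hβ : ∑ j, (β j) ^ 2 = 1)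
    (n : ℕ) (x : Fin k → ℝ) :
    H n (∑ j, β j * x j)
      = ∑ m ∈ Finset.Nat.antidiagonalTuple k n,
          ((n.factorial : ℝ) / ∏ j, ((m j).factorial : ℝ)) *
            ∏ j, (β j ^ (m j) * H (m j) (x j)) := by
  induction n using Nat.strong_induction_on with
  | _ n ih =>
    match n, ih with
    | 0, _ => simp [Finset.Nat.antidiagonalTuple_zero_right, H_zero]
    | 1, ih =>
      have h0 := ih 0 Nat.one_pos
      simp only [H_zero] at h0
      have hk0 := key β hβ x 0
      rw [← h0] at hk0
      simp only [Nat.cast_zero, zero_mul, add_zero, mul_one, zero_add] at hk0 ⊢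
      rw [show (1:ℕ) = 0 + 1 from rfl, H_succ, H_zero]
      simp only [Nat.cast_zero, zero_mul, sub_zero, mul_one]
      exact hk0
    | (n+2), ih =>
      have h1 := ih (n+1) (by omega)
      have h0 := ih n (by omega)
      have hk1 := key β hβ x (n+1)
      rw [← h1] at hk1
      rw [show n + 2 = (n+1) + 1 from rfl, H_succ, Nat.add_sub_cancel, h0]
      rw [Nat.add_sub_cancel] at hk1
      push_cast at hk1 ⊢
      linear_combination hk1
end

section
/- Let D be a probability distribution on ℝ^d × [0, 1] whose marginal on ℝ^d is N(0, I_d). Let w* ∈ ℝ^d be a unit vector, let opt = E_{(x,y)∼D}[(ReLU(w*·x) − y)²], and let α > 0. Suppose w ∈ ℝ^d is a unit vector with P_{(x,y)∼D}[sign(y − α) ≠ sign(w·x)] ≤ β for some β ≥ 0. Then E_{(x,y)∼D}[(ReLU(w·x) − y)²] ≤ 2·opt + 2π²·(β + opt/α² + 2α)². In particular, taking α = opt^{1/3}, any unit vector w whose 0/1 error on the α-thresholded labels is at most β satisfies E[(ReLU(w·x) − y)²] ≤ 2·opt + 2π²·(β + 3·opt^{1/3})². -/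
open MeasureTheory ProbabilityTheory Real

/-- `ReLU(a) = max(0, a)`. -/
noncomputable def relu (a : ℝ) : ℝ := max 0 a

/-- The standard Gaussian measure `N(0, I_d)` on `ℝ^d`. -/
noncomputable def stdGaussianPi (d : ℕ) : Measure (Fin d → ℝ) :=
  Measure.pi fun _ => gaussianReal 0 1

/-!
Let `θ` be the angle between the unit vectors `w` and `w⋆`. For a standard Gaussian `x`, the pair
`(⟪w, x⟫, ⟪w⋆, x⟫)` has the law of a standard Gaussian of the plane read along two directions at
angle `θ`, so by radial symmetry the two signs disagree with probability `θ / π`; and `θ` is at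
least the chord `‖w - w⋆‖`. Whenever the signs of `⟪w, x⟫` and `⟪w⋆, x⟫` disagree, one of them
disagrees with the thresholded label `sgn (y - α)`. For `w` this has probability at most `β`; for
`w⋆` it forces either a loss of `w⋆` of at least `α²` (probability at most `opt / α²` by Markov)
or `⟪w⋆, x⟫ ∈ [0, 2α)` (probability at most `2α`, the Gaussian density being below `1`). Hence
`‖w - w⋆‖ ≤ π (β + opt / α² + 2α)`, and as ReLU is `1`-Lipschitz and
`E ⟪w - w⋆, x⟫² = ‖w - w⋆‖²`, the loss of `w` is at most `2 opt + 2 ‖w - w⋆‖²`.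
-/

open scoped ENNReal NNReal RealInnerProductSpace

lemma sgn_ne_sgn_iff (a b : ℝ) : sgn a ≠ sgn b ↔ ¬(0 ≤ a ↔ 0 ≤ b) := by
  unfold sgn; split_ifs <;> norm_num <;> tauto

lemma measurable_sgn : Measurable sgn :=
  Measurable.ite measurableSet_Ici measurable_const measurable_const

lemma measurableSet_sgn_ne {α : Type*} [MeasurableSpace α] {f g : α → ℝ} (hf : Measurable f)
    (hg : Measurable g) : MeasurableSet {x | sgn (f x) ≠ sgn (g x)} :=
  (measurableSet_eq_fun (measurable_sgn.comp hf) (measurable_sgn.comp hg)).compl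

lemma abs_relu_sub_relu_le (a b : ℝ) : |relu a - relu b| ≤ |a - b| := by
  simpa only [relu, max_comm 0 a, max_comm 0 b] using abs_max_sub_max_le_abs a b 0

@[fun_prop]
lemma continuous_relu : Continuous relu := continuous_const.max continuous_id

lemma sq_relu_sub_le (a b y : ℝ) : (relu a - y) ^ 2 ≤ 2 * (relu b - y) ^ 2 + 2 * (a - b) ^ 2 := by
  have h : (relu a - relu b) ^ 2 ≤ (a - b) ^ 2 := sq_le_sq.2 (abs_relu_sub_relu_le a b)
  nlinarith [sq_nonneg (relu b - y - (relu a - relu b))]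

lemma sq_le_sq_relu_sub_or_mem_Ico_of_sgn_ne {α t y : ℝ} (hα : 0 < α)
    (h : sgn (y - α) ≠ sgn t) : α ^ 2 ≤ (relu t - y) ^ 2 ∨ t ∈ Set.Ico 0 (2 * α) := by
  rw [sgn_ne_sgn_iff] at h
  by_cases ht : 0 ≤ t
  · have hy : y < α := by by_contra hy; exact h ⟨fun _ => ht, fun _ => by linarith⟩
    by_cases ht2 : t < 2 * α
    · exact Or.inr ⟨ht, ht2⟩
    · left
      rw [relu, max_eq_right ht]
      nlinarith
  · have hy : α ≤ y := by by_contra hy; exact h ⟨fun h' => by linarith, fun h' => absurd h' ht⟩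
    left
    rw [relu, max_eq_left (le_of_not_ge ht)]
    nlinarith

lemma gaussianPDFReal_le_one (μ x : ℝ) : gaussianPDFReal μ 1 x ≤ 1 := by
  rw [gaussianPDFReal_def]
  have h1 : (√(2 * π * (1 : ℝ≥0)))⁻¹ ≤ 1 :=
    inv_le_one_of_one_le₀ (Real.one_le_sqrt.2 (by push_cast; linarith [pi_gt_three]))
  have h2 : rexp (-(x - μ) ^ 2 / (2 * (1 : ℝ≥0))) ≤ 1 :=
    Real.exp_le_one_iff.2 (div_nonpos_of_nonpos_of_nonneg (by nlinarith [sq_nonneg (x - μ)])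
      (by positivity))
  exact mul_le_one₀ h1 (by positivity) h2

lemma gaussianReal_le_volume (μ : ℝ) (s : Set ℝ) : gaussianReal μ 1 s ≤ volume s := by
  rw [gaussianReal_of_var_ne_zero μ one_ne_zero, withDensity_apply' _ s]
  calc ∫⁻ x in s, gaussianPDF μ 1 x ≤ ∫⁻ _ in s, 1 :=
        lintegral_mono fun x => ENNReal.ofReal_le_one.2 (gaussianPDFReal_le_one μ x)
    _ = volume s := by simp

section Plane

open Set

lemma stdGaussian_euclideanSpace_map_fin_two :
    (stdGaussian (EuclideanSpace ℝ (Fin 2))).map (fun y => (y 0, y 1))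
      = (gaussianReal 0 1).prod (gaussianReal 0 1) := by
  rw [← map_pi_eq_stdGaussian, Measure.map_map (by fun_prop) (by fun_prop)]
  exact (measurePreserving_finTwoArrow _).map_eq

lemma gaussianReal_prod_eq_withDensity :
    (gaussianReal 0 1).prod (gaussianReal 0 1) = (volume : Measure (ℝ × ℝ)).withDensity
      fun p => ENNReal.ofReal ((2 * π)⁻¹ * rexp (-(p.1 ^ 2 + p.2 ^ 2) / 2)) := by
  rw [gaussianReal_of_var_ne_zero 0 one_ne_zero, prod_withDensity (measurable_gaussianPDF 0 1)
    (measurable_gaussianPDF 0 1), Measure.volume_eq_prod]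
  congr 1
  funext p
  rw [gaussianPDF, gaussianPDF, ← ENNReal.ofReal_mul (gaussianPDFReal_nonneg _ _ _),
    gaussianPDFReal_def]
  congr 1
  have h2π : (√(2 * π)) ^ 2 = 2 * π := Real.sq_sqrt (by positivity)
  simp only [NNReal.coe_one, mul_one, sub_zero]
  rw [mul_mul_mul_comm, ← Real.exp_add, ← mul_inv, ← sq, h2π]
  ring_nf

lemma gaussianReal_prod_apply_eq_mul_of_polar {S : Set (ℝ × ℝ)} (hS : MeasurableSet S)
    {T : Set ℝ} (hT : MeasurableSet T)
    (hST : ∀ r > 0, ∀ φ ∈ Ioo (-π) π, (r * cos φ, r * sin φ) ∈ S ↔ φ ∈ T) :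
    (gaussianReal 0 1).prod (gaussianReal 0 1) S
      = (∫⁻ r in Ioi 0, ENNReal.ofReal (r * ((2 * π)⁻¹ * rexp (-r ^ 2 / 2))))
        * volume (T ∩ Ioo (-π) π) := by
  rw [gaussianReal_prod_eq_withDensity, withDensity_apply _ hS, ← lintegral_indicator hS,
    ← lintegral_comp_polarCoord_symm]
  have hpolar : ∀ q ∈ polarCoord.target, ENNReal.ofReal q.1 • S.indicator
      (fun p => ENNReal.ofReal ((2 * π)⁻¹ * rexp (-(p.1 ^ 2 + p.2 ^ 2) / 2))) (polarCoord.symm q)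
        = ENNReal.ofReal (q.1 * ((2 * π)⁻¹ * rexp (-q.1 ^ 2 / 2))) * T.indicator 1 q.2 := by
    rintro ⟨r, φ⟩ ⟨hr, hφ⟩
    rw [polarCoord_symm_apply]
    by_cases h : φ ∈ T
    · have hr2 : (r * cos φ) ^ 2 + (r * sin φ) ^ 2 = r ^ 2 := by
        linear_combination r ^ 2 * cos_sq_add_sin_sq φ
      rw [indicator_of_mem ((hST r hr φ hφ).2 h), indicator_of_mem h, hr2, smul_eq_mul,
        ← ENNReal.ofReal_mul (le_of_lt hr), Pi.one_apply, mul_one]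
    · rw [indicator_of_notMem (mt (hST r hr φ hφ).1 h), indicator_of_notMem h, smul_zero,
        mul_zero]
  rw [setLIntegral_congr_fun polarCoord.open_target.measurableSet hpolar,
    show polarCoord.target = Ioi 0 ×ˢ Ioo (-π) π from rfl, Measure.volume_eq_prod,
    ← Measure.prod_restrict, lintegral_prod_mul (g := T.indicator 1)
      (f := fun r => ENNReal.ofReal (r * ((2 * π)⁻¹ * rexp (-r ^ 2 / 2)))) (by fun_prop)
      ((measurable_one.indicator hT).aemeasurable),
    lintegral_indicator_one hT, Measure.restrict_apply hT]

lemma gaussianReal_prod_apply_of_polar {S : Set (ℝ × ℝ)} (hS : MeasurableSet S)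
    {T : Set ℝ} (hT : MeasurableSet T)
    (hST : ∀ r > 0, ∀ φ ∈ Ioo (-π) π, (r * cos φ, r * sin φ) ∈ S ↔ φ ∈ T) :
    (gaussianReal 0 1).prod (gaussianReal 0 1) S
      = volume (T ∩ Ioo (-π) π) / ENNReal.ofReal (2 * π) := by
  -- Taking `S = univ` identifies the radial factor as `1 / (2π)`.
  have hradial := gaussianReal_prod_apply_eq_mul_of_polar MeasurableSet.univ MeasurableSet.univ
    (fun _ _ _ _ => Iff.rfl)
  rw [measure_univ, univ_inter, Real.volume_Ioo, sub_neg_eq_add, ← two_mul] at hradial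
  rw [gaussianReal_prod_apply_eq_mul_of_polar hS hT hST,
    ENNReal.eq_inv_of_mul_eq_one_left hradial.symm, mul_comm, div_eq_mul_inv]

lemma cos_nonneg_iff_of_abs_lt {ψ : ℝ} (h₁ : -(π + π / 2) < ψ) (h₂ : ψ < π + π / 2) :
    0 ≤ cos ψ ↔ -(π / 2) ≤ ψ ∧ ψ ≤ π / 2 := by
  refine ⟨fun hcos => ⟨?_, ?_⟩, fun h => cos_nonneg_of_mem_Icc h⟩ <;> by_contra! hψ
  · have := cos_neg_of_pi_div_two_lt_of_lt (x := -ψ) (by linarith) (by linarith)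
    rw [cos_neg] at this
    linarith
  · linarith [cos_neg_of_pi_div_two_lt_of_lt hψ h₂]

lemma gaussianReal_prod_real_wedge {θ : ℝ} (h₀ : 0 ≤ θ) (hπ : θ ≤ π) :
    ((gaussianReal 0 1).prod (gaussianReal 0 1)).real
      {p | sgn (cos (θ / 2) * p.1 - sin (θ / 2) * p.2)
        ≠ sgn (cos (θ / 2) * p.1 + sin (θ / 2) * p.2)} = θ / π := by
  -- In polar coordinates the two half-planes are the arcs `|φ ± θ / 2| ≤ π / 2`, and `T` is
  -- their symmetric difference within `(-π, π)`.
  set T := Ico (-(π / 2) - θ / 2) (-(π / 2) + θ / 2) ∪ Ioc (π / 2 - θ / 2) (π / 2 + θ / 2)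
  have hST : ∀ r > 0, ∀ φ ∈ Ioo (-π) π, (r * cos φ, r * sin φ) ∈
      {p : ℝ × ℝ | sgn (cos (θ / 2) * p.1 - sin (θ / 2) * p.2)
        ≠ sgn (cos (θ / 2) * p.1 + sin (θ / 2) * p.2)} ↔ φ ∈ T := by
    rintro r hr φ ⟨hφ₁, hφ₂⟩
    have hcos_add :
        cos (θ / 2) * (r * cos φ) - sin (θ / 2) * (r * sin φ) = r * cos (φ + θ / 2) := by
      rw [cos_add]; ring
    have hcos_sub :
        cos (θ / 2) * (r * cos φ) + sin (θ / 2) * (r * sin φ) = r * cos (φ - θ / 2) := by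
      rw [cos_sub]; ring
    simp only [mem_ofPred_eq, sgn_ne_sgn_iff, hcos_add, hcos_sub, mul_nonneg_iff_of_pos_left hr,
      cos_nonneg_iff_of_abs_lt (ψ := φ + θ / 2) (by linarith) (by linarith),
      cos_nonneg_iff_of_abs_lt (ψ := φ - θ / 2) (by linarith) (by linarith), T, mem_union,
      mem_Ico, mem_Ioc]
    grind
  have hT : MeasurableSet T := measurableSet_Ico.union measurableSet_Ioc
  have hTsub : T ⊆ Icc (-π) π := by
    rintro φ (⟨h₁, h₂⟩ | ⟨h₁, h₂⟩) <;> constructor <;> linarith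
  have hvol : volume (T ∩ Ioo (-π) π) = ENNReal.ofReal (2 * θ) := by
    rw [measure_congr ((ae_eq_refl T).inter Ioo_ae_eq_Icc), inter_eq_left.2 hTsub,
      measure_union ?_ measurableSet_Ioc, Real.volume_Ico, Real.volume_Ioc,
      ← ENNReal.ofReal_add (by linarith) (by linarith)]
    · ring_nf
    · exact Set.disjoint_left.2 fun φ h₁ h₂ => by linarith [h₁.2, h₂.1]
  rw [measureReal_def, gaussianReal_prod_apply_of_polar
    (measurableSet_sgn_ne (by fun_prop) (by fun_prop)) hT hST, hvol,
    ← ENNReal.ofReal_div_of_pos (by positivity), ENNReal.toReal_ofReal (by positivity)]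
  field_simp

end Plane

section InnerProduct

variable {E : Type*} [NormedAddCommGroup E] [InnerProductSpace ℝ E]

lemma strongDual_comp_prod_innerSL (L : StrongDual ℝ (ℝ × ℝ)) (u v : E) :
    L.comp ((innerSL ℝ u).prod (innerSL ℝ v)) = innerSL ℝ (L (1, 0) • u + L (0, 1) • v) := by
  ext x
  have hx : (⟪u, x⟫, ⟪v, x⟫) = ⟪u, x⟫ • ((1 : ℝ), (0 : ℝ)) + ⟪v, x⟫ • ((0 : ℝ), (1 : ℝ)) := by
    simp
  simp only [ContinuousLinearMap.comp_apply, ContinuousLinearMap.prod_apply, innerSL_apply_apply]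
  rw [hx, map_add, map_smul, map_smul, inner_add_left, real_inner_smul_left,
    real_inner_smul_left, smul_eq_mul, smul_eq_mul, mul_comm, mul_comm (L (0, 1))]

lemma norm_smul_add_smul_sq (a b : ℝ) (u v : E) :
    ‖a • u + b • v‖ ^ 2 = a ^ 2 * ‖u‖ ^ 2 + 2 * a * b * ⟪u, v⟫ + b ^ 2 * ‖v‖ ^ 2 := by
  rw [norm_add_sq_real, norm_smul, norm_smul, inner_smul_left, inner_smul_right]
  simp only [Real.norm_eq_abs, mul_pow, sq_abs, conj_trivial]
  ring

lemma norm_sub_le_arccos_inner {a b : E} (ha : ‖a‖ = 1) (hb : ‖b‖ = 1) :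
    ‖a - b‖ ≤ arccos ⟪a, b⟫ := by
  have hab : |⟪a, b⟫| ≤ 1 := by simpa [ha, hb] using abs_real_inner_le_norm a b
  have hsq : ‖a - b‖ ^ 2 = 2 - 2 * cos (arccos ⟪a, b⟫) := by
    rw [cos_arccos (neg_le_of_abs_le hab) (le_of_abs_le hab), norm_sub_sq_real, ha, hb]
    ring
  refine le_of_pow_le_pow_left₀ two_ne_zero (arccos_nonneg _) ?_
  linarith [one_sub_sq_div_two_le_cos (x := arccos ⟪a, b⟫)]

end InnerProduct

section StdGaussian

variable {E : Type*} [NormedAddCommGroup E] [InnerProductSpace ℝ E] [FiniteDimensional ℝ E]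
  [MeasurableSpace E] [BorelSpace E]

lemma stdGaussian_map_inner (v : E) :
    (stdGaussian E).map (⟪v, ·⟫) = gaussianReal 0 (‖v‖ ^ 2).toNNReal := by
  have h := IsGaussian.map_eq_gaussianReal (μ := stdGaussian E) (innerSL ℝ v)
  rwa [integral_strongDual_stdGaussian, variance_dual_stdGaussian, innerSL_apply_norm] at h

lemma integrable_inner_sq_stdGaussian (v : E) :
    Integrable (fun x => ⟪v, x⟫ ^ 2) (stdGaussian E) :=
  (IsGaussian.memLp_dual _ (innerSL ℝ v) 2 (by simp)).integrable_sq

lemma integral_inner_sq_stdGaussian (v : E) : ∫ x, ⟪v, x⟫ ^ 2 ∂stdGaussian E = ‖v‖ ^ 2 := by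
  rw [← innerSL_apply_norm ℝ v, ← variance_dual_stdGaussian,
    variance_of_integral_eq_zero (by fun_prop) (integral_strongDual_stdGaussian _)]
  rfl

lemma stdGaussian_inner_mem_le_volume {v : E} (hv : ‖v‖ = 1) {s : Set ℝ} (hs : MeasurableSet s) :
    stdGaussian E {x | ⟪v, x⟫ ∈ s} ≤ volume s := by
  change stdGaussian E ((⟪v, ·⟫) ⁻¹' s) ≤ _
  rw [← Measure.map_apply (by fun_prop) hs, stdGaussian_map_inner, hv]
  simpa using gaussianReal_le_volume 0 s

lemma stdGaussian_map_inner_pair {F : Type*} [NormedAddCommGroup F] [InnerProductSpace ℝ F]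
    [FiniteDimensional ℝ F] [MeasurableSpace F] [BorelSpace F] {u v : E} {u' v' : F}
    (hu : ‖u‖ = ‖u'‖) (hv : ‖v‖ = ‖v'‖) (huv : ⟪u, v⟫ = ⟪u', v'⟫) :
    (stdGaussian E).map (fun x => (⟪u, x⟫, ⟪v, x⟫))
      = (stdGaussian F).map (fun y => (⟪u', y⟫, ⟪v', y⟫)) := by
  have := Measure.isProbabilityMeasure_map (μ := stdGaussian E)
    (f := fun x => (⟪u, x⟫, ⟪v, x⟫)) (by fun_prop)
  have := Measure.isProbabilityMeasure_map (μ := stdGaussian F)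
    (f := fun y => (⟪u', y⟫, ⟪v', y⟫)) (by fun_prop)
  refine Measure.ext_of_charFunDual (funext fun L => ?_)
  change charFunDual (Measure.map ((innerSL ℝ u).prod (innerSL ℝ v)) _) L
    = charFunDual (Measure.map ((innerSL ℝ u').prod (innerSL ℝ v')) _) L
  rw [charFunDual_map, charFunDual_map, charFunDual_stdGaussian, charFunDual_stdGaussian,
    strongDual_comp_prod_innerSL, strongDual_comp_prod_innerSL, innerSL_apply_norm,
    innerSL_apply_norm]
  simp only [← Complex.ofReal_pow, norm_smul_add_smul_sq, hu, hv, huv]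

theorem stdGaussian_real_sgn_inner_ne {a b : E} (ha : ‖a‖ = 1) (hb : ‖b‖ = 1) :
    (stdGaussian E).real {x | sgn ⟪a, x⟫ ≠ sgn ⟪b, x⟫} = arccos ⟪a, b⟫ / π := by
  set θ := arccos ⟪a, b⟫
  have hab : |⟪a, b⟫| ≤ 1 := by simpa [ha, hb] using abs_real_inner_le_norm a b
  have hcos : cos θ = ⟪a, b⟫ := cos_arccos (neg_le_of_abs_le hab) (le_of_abs_le hab)
  -- Unit vectors of the plane at angles `∓θ / 2` have the Gram matrix of `a, b`; the symmetric
  -- placement keeps the angular computation of `gaussianReal_prod_real_wedge` within one period.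
  set u : EuclideanSpace ℝ (Fin 2) := !₂[cos (θ / 2), -sin (θ / 2)]
  set v : EuclideanSpace ℝ (Fin 2) := !₂[cos (θ / 2), sin (θ / 2)]
  have hu : ‖a‖ = ‖u‖ := by
    rw [ha, EuclideanSpace.norm_eq]; simp [u]
  have hv : ‖b‖ = ‖v‖ := by
    rw [hb, EuclideanSpace.norm_eq]; simp [v]
  have huv : ⟪a, b⟫ = ⟪u, v⟫ := by
    rw [← hcos, show θ = 2 * (θ / 2) by ring, cos_two_mul']
    simp [u, v, PiLp.inner_apply]
    ring
  have hQ : MeasurableSet {q : ℝ × ℝ | sgn q.1 ≠ sgn q.2} :=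
    measurableSet_sgn_ne measurable_fst measurable_snd
  calc (stdGaussian E).real {x | sgn ⟪a, x⟫ ≠ sgn ⟪b, x⟫}
      = ((stdGaussian E).map (fun x => (⟪a, x⟫, ⟪b, x⟫))).real {q | sgn q.1 ≠ sgn q.2} := by
        rw [map_measureReal_apply (by fun_prop) hQ]; rfl
    _ = ((stdGaussian (EuclideanSpace ℝ (Fin 2))).map (fun y => (⟪u, y⟫, ⟪v, y⟫))).real
          {q | sgn q.1 ≠ sgn q.2} := by rw [stdGaussian_map_inner_pair hu hv huv]
    _ = ((gaussianReal 0 1).prod (gaussianReal 0 1)).real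
          {p | sgn (cos (θ / 2) * p.1 - sin (θ / 2) * p.2)
            ≠ sgn (cos (θ / 2) * p.1 + sin (θ / 2) * p.2)} := by
        have hpair : (fun y : EuclideanSpace ℝ (Fin 2) => (⟪u, y⟫, ⟪v, y⟫))
            = (fun p : ℝ × ℝ => (cos (θ / 2) * p.1 - sin (θ / 2) * p.2,
                cos (θ / 2) * p.1 + sin (θ / 2) * p.2)) ∘ (fun y => (y 0, y 1)) := by
          ext y <;> simp [u, v, PiLp.inner_apply] <;> ring
        rw [hpair, ← Measure.map_map (by fun_prop) (by fun_prop),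
          stdGaussian_euclideanSpace_map_fin_two, map_measureReal_apply (by fun_prop) hQ]
        rfl
    _ = θ / π := gaussianReal_prod_real_wedge (arccos_nonneg _) (arccos_le_pi _)

end StdGaussian

section SquareLoss

open Set

variable {E : Type*} [NormedAddCommGroup E] [InnerProductSpace ℝ E] [FiniteDimensional ℝ E]
  [MeasurableSpace E] [BorelSpace E] {D : Measure (E × ℝ)}

noncomputable def sqLoss (D : Measure (E × ℝ)) (w : E) : ℝ :=
  ∫ p, (relu ⟪w, p.1⟫ - p.2) ^ 2 ∂D

lemma integrable_inner_fst_sq (hmarg : D.map Prod.fst = stdGaussian E) (v : E) :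
    Integrable (fun p : E × ℝ => ⟪v, p.1⟫ ^ 2) D :=
  (MeasurePreserving.mk measurable_fst hmarg).integrable_comp_of_integrable
    (integrable_inner_sq_stdGaussian v)

lemma integral_inner_fst_sq (hmarg : D.map Prod.fst = stdGaussian E) (v : E) :
    ∫ p, ⟪v, p.1⟫ ^ 2 ∂D = ‖v‖ ^ 2 := by
  rw [← integral_inner_sq_stdGaussian v, ← hmarg,
    integral_map measurable_fst.aemeasurable (by fun_prop)]

lemma integrable_sqLoss [IsFiniteMeasure D] (hmarg : D.map Prod.fst = stdGaussian E)
    (hy : ∀ᵐ p ∂D, p.2 ∈ Icc (0 : ℝ) 1) (w : E) :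
    Integrable (fun p : E × ℝ => (relu ⟪w, p.1⟫ - p.2) ^ 2) D := by
  refine Integrable.mono' (((integrable_inner_fst_sq hmarg w).const_mul 2).add
    (integrable_const 2)) (by fun_prop) ?_
  filter_upwards [hy] with p ⟨hy₀, hy₁⟩
  have h := sq_relu_sub_le ⟪w, p.1⟫ 0 p.2
  rw [show relu 0 = 0 from max_self 0, zero_sub, neg_sq, sub_zero] at h
  rw [Real.norm_of_nonneg (sq_nonneg _)]
  simp only [Pi.add_apply]
  nlinarith

lemma sqLoss_le [IsFiniteMeasure D] (hmarg : D.map Prod.fst = stdGaussian E)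
    (hy : ∀ᵐ p ∂D, p.2 ∈ Icc (0 : ℝ) 1) (w w' : E) :
    sqLoss D w ≤ 2 * sqLoss D w' + 2 * ‖w - w'‖ ^ 2 := by
  have hbound := ((integrable_sqLoss hmarg hy w').const_mul 2).add
    ((integrable_inner_fst_sq hmarg (w - w')).const_mul 2)
  rw [← integral_inner_fst_sq hmarg, sqLoss, sqLoss, ← integral_const_mul, ← integral_const_mul,
    ← integral_add ((integrable_sqLoss hmarg hy w').const_mul 2)
      ((integrable_inner_fst_sq hmarg _).const_mul 2)]
  refine integral_mono (integrable_sqLoss hmarg hy w) hbound fun p => ?_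
  simpa [inner_sub_left] using sq_relu_sub_le ⟪w, p.1⟫ ⟪w', p.1⟫ p.2

lemma measureReal_sgn_sub_ne_le [IsFiniteMeasure D] (hmarg : D.map Prod.fst = stdGaussian E)
    {v : E} (hv : ‖v‖ = 1) (hint : Integrable (fun p : E × ℝ => (relu ⟪v, p.1⟫ - p.2) ^ 2) D)
    {α : ℝ} (hα : 0 < α) :
    D.real {p | sgn (p.2 - α) ≠ sgn ⟪v, p.1⟫} ≤ sqLoss D v / α ^ 2 + 2 * α := by
  have hmarkov : D.real {p | α ^ 2 ≤ (relu ⟪v, p.1⟫ - p.2) ^ 2} ≤ sqLoss D v / α ^ 2 := by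
    rw [le_div_iff₀ (by positivity), mul_comm]
    exact mul_meas_ge_le_integral_of_nonneg (Filter.Eventually.of_forall fun p => sq_nonneg _)
      hint _
  have hanti : D.real {p | ⟪v, p.1⟫ ∈ Ico 0 (2 * α)} ≤ 2 * α := by
    have h : D {p | ⟪v, p.1⟫ ∈ Ico 0 (2 * α)} = stdGaussian E {x | ⟪v, x⟫ ∈ Ico 0 (2 * α)} := by
      have hmeas : MeasurableSet {x : E | ⟪v, x⟫ ∈ Ico 0 (2 * α)} :=
        measurableSet_Ico.preimage (f := (⟪v, ·⟫)) (by fun_prop)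
      rw [← hmarg, Measure.map_apply measurable_fst hmeas]
      rfl
    rw [measureReal_def, h]
    calc (stdGaussian E {x | ⟪v, x⟫ ∈ Ico 0 (2 * α)}).toReal ≤ (volume (Ico 0 (2 * α))).toReal :=
          ENNReal.toReal_mono measure_Ico_lt_top.ne
            (stdGaussian_inner_mem_le_volume hv measurableSet_Ico)
      _ = 2 * α := by simp [hα.le]
  calc D.real {p | sgn (p.2 - α) ≠ sgn ⟪v, p.1⟫}
      ≤ D.real ({p | α ^ 2 ≤ (relu ⟪v, p.1⟫ - p.2) ^ 2} ∪ {p | ⟪v, p.1⟫ ∈ Ico 0 (2 * α)}) :=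
        measureReal_mono fun p hp => by exact sq_le_sq_relu_sub_or_mem_Ico_of_sgn_ne hα hp
    _ ≤ _ := measureReal_union_le _ _
    _ ≤ sqLoss D v / α ^ 2 + 2 * α := add_le_add hmarkov hanti

theorem sqLoss_le_of_measureReal_sgn_sub_ne_le [IsFiniteMeasure D]
    (hmarg : D.map Prod.fst = stdGaussian E) (hy : ∀ᵐ p ∂D, p.2 ∈ Icc (0 : ℝ) 1)
    {w wstar : E} (hw : ‖w‖ = 1) (hwstar : ‖wstar‖ = 1) {α β : ℝ} (hα : 0 < α)
    (hβ : D.real {p | sgn (p.2 - α) ≠ sgn ⟪w, p.1⟫} ≤ β) :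
    sqLoss D w ≤ 2 * sqLoss D wstar + 2 * π ^ 2 * (β + sqLoss D wstar / α ^ 2 + 2 * α) ^ 2 := by
  set ε := β + sqLoss D wstar / α ^ 2 + 2 * α
  have hdis : (stdGaussian E).real {x | sgn ⟪w, x⟫ ≠ sgn ⟪wstar, x⟫} ≤ ε := by
    rw [← hmarg, map_measureReal_apply measurable_fst
      (measurableSet_sgn_ne (by fun_prop) (by fun_prop))]
    calc D.real (Prod.fst ⁻¹' {x | sgn ⟪w, x⟫ ≠ sgn ⟪wstar, x⟫})
        ≤ D.real ({p | sgn (p.2 - α) ≠ sgn ⟪w, p.1⟫} ∪ {p | sgn (p.2 - α) ≠ sgn ⟪wstar, p.1⟫}) :=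
          measureReal_mono fun p hp => by
            by_contra h
            simp only [mem_union, mem_ofPred_eq, not_or, not_not] at h
            exact hp (h.1.symm.trans h.2)
      _ ≤ _ := measureReal_union_le _ _
      _ ≤ ε := by
          linarith [measureReal_sgn_sub_ne_le hmarg hwstar (integrable_sqLoss hmarg hy wstar) hα]
  have hdist : ‖w - wstar‖ ≤ π * ε :=
    calc ‖w - wstar‖ ≤ arccos ⟪w, wstar⟫ := norm_sub_le_arccos_inner hw hwstar
      _ = π * (stdGaussian E).real {x | sgn ⟪w, x⟫ ≠ sgn ⟪wstar, x⟫} := by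
          rw [stdGaussian_real_sgn_inner_ne hw hwstar]; field_simp
      _ ≤ π * ε := by gcongr
  calc sqLoss D w ≤ 2 * sqLoss D wstar + 2 * ‖w - wstar‖ ^ 2 := sqLoss_le hmarg hy w wstar
    _ ≤ 2 * sqLoss D wstar + 2 * (π * ε) ^ 2 := by gcongr
    _ = 2 * sqLoss D wstar + 2 * π ^ 2 * ε ^ 2 := by ring

end SquareLoss

lemma div_sq_rpow_one_third {x : ℝ} (hx : 0 ≤ x) :
    x / (x ^ ((1 : ℝ) / 3)) ^ 2 = x ^ ((1 : ℝ) / 3) := by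
  rcases hx.eq_or_lt with rfl | hx
  · simp
  · rw [← rpow_natCast, ← rpow_mul hx.le, div_eq_iff (by positivity), ← rpow_add hx]
    norm_num

lemma sum_mul_eq_inner_toLp {d : ℕ} (v x : Fin d → ℝ) :
    ∑ i, v i * x i = ⟪WithLp.toLp 2 v, WithLp.toLp 2 x⟫ := by
  simp [EuclideanSpace.inner_toLp_toLp, dotProduct, mul_comm]

lemma norm_toLp_eq_one {d : ℕ} {v : Fin d → ℝ} (hv : ∑ i, v i ^ 2 = 1) :
    ‖WithLp.toLp 2 v‖ = 1 := by
  simp [EuclideanSpace.norm_eq, hv]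

theorem stmt17_general (d : ℕ) (D : Measure ((Fin d → ℝ) × ℝ)) [IsProbabilityMeasure D]
    (hmarg : D.map Prod.fst = stdGaussianPi d)
    (hy : ∀ᵐ p : (Fin d → ℝ) × ℝ ∂D, p.2 ∈ Set.Icc (0 : ℝ) 1)
    (wstar : Fin d → ℝ) (hwstar : ∑ i, (wstar i) ^ 2 = 1)
    (opt : ℝ) (hopt : opt = ∫ p : (Fin d → ℝ) × ℝ,
        (relu (∑ i, wstar i * p.1 i) - p.2) ^ 2 ∂D)
    (α : ℝ) (hα : 0 < α)
    (w : Fin d → ℝ) (hw : ∑ i, (w i) ^ 2 = 1)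
    (β : ℝ)
    (hβw : (D {p : (Fin d → ℝ) × ℝ |
        sgn (p.2 - α) ≠ sgn (∑ i, w i * p.1 i)}).toReal ≤ β) :
    (∫ p : (Fin d → ℝ) × ℝ, (relu (∑ i, w i * p.1 i) - p.2) ^ 2 ∂D)
      ≤ 2 * opt + 2 * Real.pi ^ 2 * (β + opt / α ^ 2 + 2 * α) ^ 2 ∧
    (α = opt ^ ((1 : ℝ) / 3) →
      (∫ p : (Fin d → ℝ) × ℝ, (relu (∑ i, w i * p.1 i) - p.2) ^ 2 ∂D)
        ≤ 2 * opt + 2 * Real.pi ^ 2 * (β + 3 * opt ^ ((1 : ℝ) / 3)) ^ 2) := by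
  let e := (MeasurableEquiv.toLp 2 (Fin d → ℝ)).prodCongr (MeasurableEquiv.refl ℝ)
  have hmarg' : (D.map e).map Prod.fst = stdGaussian (EuclideanSpace ℝ (Fin d)) := by
    rw [Measure.map_map measurable_fst e.measurable,
      show Prod.fst ∘ e = WithLp.toLp 2 ∘ Prod.fst from rfl,
      ← Measure.map_map (by fun_prop) measurable_fst, hmarg]
    exact map_pi_eq_stdGaussian
  have hy' : ∀ᵐ p ∂D.map e, p.2 ∈ Set.Icc (0 : ℝ) 1 :=
    (ae_map_iff e.measurable.aemeasurable (measurable_snd measurableSet_Icc)).2 hy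
  have hloss (v : Fin d → ℝ) : ∫ p, (relu (∑ i, v i * p.1 i) - p.2) ^ 2 ∂D
      = sqLoss (D.map e) (WithLp.toLp 2 v) := by
    rw [sqLoss, integral_map_equiv]
    simp only [sum_mul_eq_inner_toLp]
    rfl
  have hβ' : (D.map e).real {p | sgn (p.2 - α) ≠ sgn ⟪WithLp.toLp 2 w, p.1⟫} ≤ β := by
    rw [measureReal_def, e.map_apply]
    simp only [sum_mul_eq_inner_toLp] at hβw
    exact hβw
  have key := sqLoss_le_of_measureReal_sgn_sub_ne_le hmarg' hy' (norm_toLp_eq_one hw)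
    (norm_toLp_eq_one hwstar) hα hβ'
  rw [← hloss, ← hloss, ← hopt] at key
  refine ⟨key, fun hα3 => ?_⟩
  have hopt₀ : 0 ≤ opt := hopt ▸ integral_nonneg fun _ => sq_nonneg _
  rwa [show β + opt / α ^ 2 + 2 * α = β + 3 * opt ^ ((1 : ℝ) / 3) by
    rw [hα3, div_sq_rpow_one_third hopt₀]; ring] at key

/-- Deterministic core of the `O(opt^{2/3})` approximation guarantee: if `D` is a
distribution on `ℝ^d × [0,1]` with Gaussian marginal, `w*` a unit vector with square
loss `opt`, `α > 0`, and `w` a unit vector whose 0/1 error against the `α`-thresholded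
labels is at most `β`, then `E[(ReLU(w·x) − y)²] ≤ 2·opt + 2π²·(β + opt/α² + 2α)²`;
in particular, for `α = opt^{1/3}` the bound becomes `2·opt + 2π²·(β + 3·opt^{1/3})²`. -/
theorem stmt17 (d : ℕ) (D : Measure ((Fin d → ℝ) × ℝ)) [IsProbabilityMeasure D]
    (hmarg : D.map Prod.fst = stdGaussianPi d)
    (hy : ∀ᵐ p : (Fin d → ℝ) × ℝ ∂D, p.2 ∈ Set.Icc (0 : ℝ) 1)
    (wstar : Fin d → ℝ) (hwstar : ∑ i, (wstar i) ^ 2 = 1)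
    (opt : ℝ) (hopt : opt = ∫ p : (Fin d → ℝ) × ℝ,
        (relu (∑ i, wstar i * p.1 i) - p.2) ^ 2 ∂D)
    (α : ℝ) (hα : 0 < α)
    (w : Fin d → ℝ) (hw : ∑ i, (w i) ^ 2 = 1)
    (β : ℝ) (hβ : 0 ≤ β)
    (hβw : (D {p : (Fin d → ℝ) × ℝ |
        sgn (p.2 - α) ≠ sgn (∑ i, w i * p.1 i)}).toReal ≤ β) :
    (∫ p : (Fin d → ℝ) × ℝ, (relu (∑ i, w i * p.1 i) - p.2) ^ 2 ∂D)
      ≤ 2 * opt + 2 * Real.pi ^ 2 * (β + opt / α ^ 2 + 2 * α) ^ 2 ∧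
    (α = opt ^ ((1 : ℝ) / 3) →
      (∫ p : (Fin d → ℝ) × ℝ, (relu (∑ i, w i * p.1 i) - p.2) ^ 2 ∂D)
        ≤ 2 * opt + 2 * Real.pi ^ 2 * (β + 3 * opt ^ ((1 : ℝ) / 3)) ^ 2) :=
  stmt17_general d D hmarg hy wstar hwstar opt hopt α hα w hw β hβw
end
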